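/- arXiv:2602.04826 — 6 statements merged into one kernel-verified Lean document; each statement's English description precedes it below -/
import Mathlib

section
/- Let X, Y, Z be metric spaces and let r, r' ≥ 0 be real numbers. If the quasi-isometric distance satisfies d̂(X,Y) ≤ r and d̂(Y,Z) ≤ r', then d̂(X,Z) ≤ 2·(r + r' + r·r'). -/
open ENNReal

/-- `f` is an `(A,B)`-quasi-isometric embedding. -/
def QIEmb {X Y : Type*} [MetricSpace X] [MetricSpace Y] (A B : ℝ) (f : X → Y) : Prop :=
  ∀ x x' : X, (1 / A) * dist x x' - B ≤ dist (f x) (f x') ∧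
    dist (f x) (f x') ≤ A * dist x x' + B

/-- `X` and `Y` are `(A,B,C)`-quasi-isometric. -/
def QuasiIsometric (X Y : Type*) [MetricSpace X] [MetricSpace Y] (A B C : ℝ) : Prop :=
  ∃ (f : X → Y) (g : Y → X), QIEmb A B f ∧ QIEmb A B g ∧
    (∀ x : X, dist (g (f x)) x ≤ C) ∧ (∀ y : Y, dist (f (g y)) y ≤ C)

/-- The quasi-isometric distance `d̂`. -/
noncomputable def qiDist (X Y : Type*) [MetricSpace X] [MetricSpace Y] : ℝ≥0∞ :=
  sInf {e : ℝ≥0∞ | ∃ r : ℝ, 0 < r ∧ e = ENNReal.ofReal r ∧ QuasiIsometric X Y (1 + r) r r}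

/-! Quasi-isometries compose: composing `(1 + s, s, s)`- and `(1 + s', s', s')`-quasi-isometries
gives a `(1 + t, t, t)`-quasi-isometry with `t = 2 * (s + s' + s * s')`, the additive constant
`C` of the composite being exactly `t`. Since the infimum defining `qiDist` need not be attained,
one composes quasi-isometries for `r + ε` and `r' + ε` and lets `ε → 0`. -/

open Filter Topology

section

variable {X Y Z : Type*} [MetricSpace X] [MetricSpace Y] [MetricSpace Z]

namespace QIEmb

theorem mono {A B A₁ B₁ : ℝ} {f : X → Y} (hf : QIEmb A B f) (hA : 0 < A) (hAA₁ : A ≤ A₁)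
    (hBB₁ : B ≤ B₁) : QIEmb A₁ B₁ f := by
  intro x x'
  have hinv : 1 / A₁ ≤ 1 / A := one_div_le_one_div_of_le hA hAA₁
  constructor
  · calc 1 / A₁ * dist x x' - B₁ ≤ 1 / A * dist x x' - B := by gcongr
      _ ≤ dist (f x) (f x') := (hf x x').1
  · calc dist (f x) (f x') ≤ A * dist x x' + B := (hf x x').2
      _ ≤ A₁ * dist x x' + B₁ := by gcongr

theorem comp {A B A' B' : ℝ} {f : X → Y} {g : Y → Z} (hf : QIEmb A B f) (hg : QIEmb A' B' g)
    (hA' : 1 ≤ A') (hB : 0 ≤ B) : QIEmb (A * A') (A' * B + B') (g ∘ f) := by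
  intro x x'
  have hA'pos : 0 < A' := by linarith
  obtain ⟨hf_lo, hf_hi⟩ := hf x x'
  obtain ⟨hg_lo, hg_hi⟩ := hg (f x) (f x')
  constructor
  · have hB_div : B / A' ≤ A' * B :=
      (div_le_self hB hA').trans (le_mul_of_one_le_left hB hA')
    calc 1 / (A * A') * dist x x' - (A' * B + B')
        ≤ 1 / A' * (1 / A * dist x x' - B) - B' := by
          have hexpand : 1 / A' * (1 / A * dist x x' - B) = 1 / (A * A') * dist x x' - B / A' := by
            ring
          linarith
      _ ≤ 1 / A' * dist (f x) (f x') - B' := by gcongr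
      _ ≤ dist (g (f x)) (g (f x')) := hg_lo
  · calc dist (g (f x)) (g (f x')) ≤ A' * dist (f x) (f x') + B' := hg_hi
      _ ≤ A' * (A * dist x x' + B) + B' := by gcongr
      _ = A * A' * dist x x' + (A' * B + B') := by ring

end QIEmb

namespace QuasiIsometric

theorem mono {A B C A₁ B₁ C₁ : ℝ} (h : QuasiIsometric X Y A B C) (hA : 0 < A) (hAA₁ : A ≤ A₁)
    (hBB₁ : B ≤ B₁) (hCC₁ : C ≤ C₁) : QuasiIsometric X Y A₁ B₁ C₁ := by
  obtain ⟨f, g, hf, hg, hgf, hfg⟩ := h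
  exact ⟨f, g, hf.mono hA hAA₁ hBB₁, hg.mono hA hAA₁ hBB₁,
    fun x ↦ (hgf x).trans hCC₁, fun y ↦ (hfg y).trans hCC₁⟩

theorem comp {A B C A' B' C' : ℝ} (h : QuasiIsometric X Y A B C)
    (h' : QuasiIsometric Y Z A' B' C') (hA : 1 ≤ A) (hA' : 1 ≤ A') (hB : 0 ≤ B) (hB' : 0 ≤ B') :
    QuasiIsometric X Z (A * A') (max (A' * B + B') (A * B' + B))
      (max (A * C' + B + C) (A' * C + B' + C')) := by
  obtain ⟨f, g, hf, hg, hgf, hfg⟩ := h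
  obtain ⟨f', g', hf', hg', hgf', hfg'⟩ := h'
  refine ⟨f' ∘ f, g ∘ g', ?_, ?_, fun x ↦ ?_, fun z ↦ ?_⟩
  · exact (hf.comp hf' hA' hB).mono (by positivity) le_rfl (le_max_left _ _)
  · rw [mul_comm A]
    exact (hg'.comp hg hA hB').mono (by positivity) le_rfl (le_max_right _ _)
  · refine le_trans ?_ (le_max_left _ _)
    calc dist (g (g' (f' (f x)))) x
        ≤ dist (g (g' (f' (f x)))) (g (f x)) + dist (g (f x)) x := dist_triangle _ _ _
      _ ≤ (A * dist (g' (f' (f x))) (f x) + B) + C := add_le_add (hg _ _).2 (hgf x)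
      _ ≤ A * C' + B + C := by gcongr; exact hgf' (f x)
  · refine le_trans ?_ (le_max_right _ _)
    calc dist (f' (f (g (g' z)))) z
        ≤ dist (f' (f (g (g' z)))) (f' (g' z)) + dist (f' (g' z)) z := dist_triangle _ _ _
      _ ≤ (A' * dist (f (g (g' z))) (g' z) + B') + C' := add_le_add (hf' _ _).2 (hfg' z)
      _ ≤ A' * C + B' + C' := by gcongr; exact hfg (g' z)

theorem comp_one_add {s s' : ℝ} (hs : 0 ≤ s) (hs' : 0 ≤ s')
    (h : QuasiIsometric X Y (1 + s) s s) (h' : QuasiIsometric Y Z (1 + s') s' s') :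
    QuasiIsometric X Z (1 + 2 * (s + s' + s * s')) (2 * (s + s' + s * s'))
      (2 * (s + s' + s * s')) := by
  have hss' := mul_nonneg hs hs'
  refine (h.comp h' (by linarith) (by linarith) hs hs').mono (by positivity) (by nlinarith)
    (max_le (by nlinarith) (by nlinarith)) (max_le (by nlinarith) (by nlinarith))

end QuasiIsometric

theorem qiDist_le_ofReal {r : ℝ} (hr : 0 < r) (h : QuasiIsometric X Y (1 + r) r r) :
    qiDist X Y ≤ ENNReal.ofReal r :=
  sInf_le ⟨r, hr, rfl, h⟩

theorem exists_quasiIsometric_of_qiDist_lt {r : ℝ} (h : qiDist X Y < ENNReal.ofReal r) :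
    ∃ s, 0 < s ∧ s < r ∧ QuasiIsometric X Y (1 + s) s s := by
  obtain ⟨e, ⟨s, hs, rfl, hQI⟩, hsr⟩ := sInf_lt_iff.mp h
  exact ⟨s, hs, (ENNReal.ofReal_lt_ofReal_iff'.mp hsr).1, hQI⟩

theorem qiDist_le_of_lt_of_lt {r r' : ℝ} (hXY : qiDist X Y < ENNReal.ofReal r)
    (hYZ : qiDist Y Z < ENNReal.ofReal r') :
    qiDist X Z ≤ ENNReal.ofReal (2 * (r + r' + r * r')) := by
  obtain ⟨s, hs, hsr, hQI⟩ := exists_quasiIsometric_of_qiDist_lt hXY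
  obtain ⟨s', hs', hsr', hQI'⟩ := exists_quasiIsometric_of_qiDist_lt hYZ
  calc qiDist X Z ≤ ENNReal.ofReal (2 * (s + s' + s * s')) :=
        qiDist_le_ofReal (by positivity) (hQI.comp_one_add hs.le hs'.le hQI')
    _ ≤ ENNReal.ofReal (2 * (r + r' + r * r')) := by
        have hprod : s * s' ≤ r * r' := mul_le_mul hsr.le hsr'.le hs'.le (hs.trans hsr).le
        exact ENNReal.ofReal_le_ofReal (by linarith)

end

/-- Generalized triangle inequality for the quasi-isometric distance. -/
theorem qiDist_generalized_triangle
    (X Y Z : Type*) [MetricSpace X] [MetricSpace Y] [MetricSpace Z]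
    (r r' : ℝ) (hr : 0 ≤ r) (hr' : 0 ≤ r')
    (hXY : qiDist X Y ≤ ENNReal.ofReal r) (hYZ : qiDist Y Z ≤ ENNReal.ofReal r') :
    qiDist X Z ≤ ENNReal.ofReal (2 * (r + r' + r * r')) := by
  let bound : ℝ → ℝ≥0∞ := fun ε ↦ ENNReal.ofReal (2 * ((r + ε) + (r' + ε) + (r + ε) * (r' + ε)))
  have hbound : Tendsto bound (𝓝[>] 0) (𝓝 (ENNReal.ofReal (2 * (r + r' + r * r')))) := by
    have hcont : Continuous bound := ENNReal.continuous_ofReal.comp (by fun_prop)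
    simpa [bound] using (hcont.tendsto 0).mono_left nhdsWithin_le_nhds
  refine ge_of_tendsto hbound ?_
  filter_upwards [self_mem_nhdsWithin] with ε (hε : 0 < ε)
  have hlt {q : ℝ} (hq : 0 ≤ q) : ENNReal.ofReal q < ENNReal.ofReal (q + ε) :=
    ENNReal.ofReal_lt_ofReal_iff'.mpr ⟨by linarith, by linarith⟩
  exact qiDist_le_of_lt_of_lt (hXY.trans_lt (hlt hr)) (hYZ.trans_lt (hlt hr'))
end

section
/- For all nonempty metric spaces X and Y, the quasi-isometric distance and the Gromov–Hausdorff distance satisfy d̂(X,Y) ≤ 4·d_GH(X,Y), where both sides are taken in [0, ∞]. -/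
open ENNReal

/-- A correspondence between `X` and `Y`: both projections are surjective. -/
def IsCorrespondence {X Y : Type*} (R : Set (X × Y)) : Prop :=
  (∀ x : X, ∃ y : Y, (x, y) ∈ R) ∧ (∀ y : Y, ∃ x : X, (x, y) ∈ R)

/-- The distortion of a correspondence, in `[0,∞]`. -/
noncomputable def corDis {X Y : Type*} [MetricSpace X] [MetricSpace Y]
    (R : Set (X × Y)) : ℝ≥0∞ :=
  ⨆ p ∈ R, ⨆ q ∈ R, ENNReal.ofReal |dist p.1 q.1 - dist p.2 q.2|

/-- The Gromov–Hausdorff distance of arbitrary metric spaces, in `[0,∞]`. -/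
noncomputable def ghDist (X Y : Type*) [MetricSpace X] [MetricSpace Y] : ℝ≥0∞ :=
  (1 / 2) * ⨅ R : {R : Set (X × Y) // IsCorrespondence R}, corDis R.1

/-!
A correspondence `R` of distortion at most `r` yields maps `f : X → Y` and `g : Y → X` with
`(x, f x) ∈ R` and `(g y, y) ∈ R`. Any two pairs of `R` change distances by at most `r`,
so `f` and `g` are additive `r`-rough isometries, hence `(1 + r, r)`-quasi-isometric embeddings,
and comparing the pairs `(x, f x)` and `(g (f x), f x)` gives `dist (g (f x)) x ≤ r`.
Thus `d̂(X, Y) ≤ dis R` for every correspondence, i.e. `d̂ ≤ 2 d_GH ≤ 4 d_GH`.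
-/

theorem QIEmb.of_abs_dist_sub_le {X Y : Type*} [MetricSpace X] [MetricSpace Y] {f : X → Y}
    {r : ℝ} (hr : 0 ≤ r) (hf : ∀ x x', |dist (f x) (f x') - dist x x'| ≤ r) :
    QIEmb (1 + r) r f := by
  intro x x'
  have hd := abs_le.mp (hf x x')
  have hinv : 1 / (1 + r) * dist x x' ≤ dist x x' :=
    mul_le_of_le_one_left dist_nonneg ((div_le_one (by linarith)).mpr (by linarith))
  constructor
  · linarith
  · nlinarith [dist_nonneg (x := x) (y := x')]

section Correspondence

variable {X Y : Type*} [MetricSpace X] [MetricSpace Y] {R : Set (X × Y)}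

theorem abs_dist_sub_dist_le_of_corDis_le {r : ℝ} (hr : 0 ≤ r) (h : corDis R ≤ ENNReal.ofReal r)
    {x x' : X} {y y' : Y} (hxy : (x, y) ∈ R) (hxy' : (x', y') ∈ R) :
    |dist x x' - dist y y'| ≤ r := by
  have hle : ENNReal.ofReal |dist x x' - dist y y'| ≤ corDis R :=
    le_iSup₂_of_le (x, y) hxy (le_iSup₂_of_le (x', y') hxy' le_rfl)
  exact (ENNReal.ofReal_le_ofReal_iff hr).mp (hle.trans h)

theorem IsCorrespondence.quasiIsometric (hR : IsCorrespondence R) {r : ℝ} (hr : 0 ≤ r)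
    (h : corDis R ≤ ENNReal.ofReal r) : QuasiIsometric X Y (1 + r) r r := by
  choose f hf using hR.1
  choose g hg using hR.2
  have hR_dist : ∀ {x x' : X} {y y' : Y}, (x, y) ∈ R → (x', y') ∈ R →
      |dist x x' - dist y y'| ≤ r :=
    abs_dist_sub_dist_le_of_corDis_le hr h
  refine ⟨f, g, QIEmb.of_abs_dist_sub_le hr fun x x' => ?_,
    QIEmb.of_abs_dist_sub_le hr fun y y' => hR_dist (hg y) (hg y'), fun x => ?_, fun y => ?_⟩
  · rw [abs_sub_comm]
    exact hR_dist (hf x) (hf x')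
  · simpa [dist_comm x] using hR_dist (hf x) (hg (f x))
  · simpa [dist_comm y] using hR_dist (hf (g y)) (hg y)

theorem IsCorrespondence.qiDist_le_corDis (hR : IsCorrespondence R) :
    qiDist X Y ≤ corDis R := by
  refine ENNReal.le_of_forall_pos_le_add fun ε hε hfin => ?_
  have hD : corDis R + ε = ENNReal.ofReal ((corDis R).toReal + ε) := by
    rw [ENNReal.ofReal_add ENNReal.toReal_nonneg ε.coe_nonneg, ENNReal.ofReal_toReal hfin.ne,
      ENNReal.ofReal_coe_nnreal]
  have hr : 0 < (corDis R).toReal + ε := by positivity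
  rw [hD]
  exact sInf_le ⟨_, hr, rfl, hR.quasiIsometric hr.le (hD ▸ le_self_add)⟩

end Correspondence

theorem iInf_corDis_eq_two_mul_ghDist (X Y : Type*) [MetricSpace X] [MetricSpace Y] :
    ⨅ R : {R : Set (X × Y) // IsCorrespondence R}, corDis R.1 = 2 * ghDist X Y := by
  rw [ghDist, ← mul_assoc, one_div, ENNReal.mul_inv_cancel two_ne_zero ENNReal.ofNat_ne_top,
    one_mul]

theorem qiDist_le_four_mul_ghDist_general
    (X Y : Type*) [MetricSpace X] [MetricSpace Y] :
    qiDist X Y ≤ 4 * ghDist X Y :=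
  calc qiDist X Y ≤ ⨅ R : {R : Set (X × Y) // IsCorrespondence R}, corDis R.1 :=
        le_iInf fun R => R.2.qiDist_le_corDis
    _ = 2 * ghDist X Y := iInf_corDis_eq_two_mul_ghDist X Y
    _ ≤ 4 * ghDist X Y := by gcongr; norm_num

/-- The quasi-isometric distance is at most four times the Gromov–Hausdorff distance. -/
theorem qiDist_le_four_mul_ghDist
    (X Y : Type*) [MetricSpace X] [MetricSpace Y] [Nonempty X] [Nonempty Y] :
    qiDist X Y ≤ 4 * ghDist X Y :=
  qiDist_le_four_mul_ghDist_general X Y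
end

section
/- Let α > 0 be an irrational real number. Consider the subsets αℤ = { α·k : k ∈ ℤ } and ℤ of the real line, each with the metric induced from ℝ. Then every map f : αℤ → ℤ has distortion dis f = sup{ | |x − x'| − |f(x) − f(x')| | : x, x' ∈ αℤ } ≥ 1/2. Consequently, every correspondence R between αℤ and ℤ has dis R ≥ 1/2, and hence d_GH(αℤ, ℤ) ≥ 1/4. -/
/-!
Since `α` is irrational, `ℤ + αℤ` is dense in `ℝ`, so some `αn` lies within `ε` of `m + 1/2`
for an integer `m`; such a point is at distance `> 1/2 - ε` from every integer. For any map
`f : αℤ → ℤ`, the pair `αn, 0` has distance `|αn|`, while `f (αn), f 0` are at integer distance,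
so `dis f > 1/2 - ε`. A correspondence contains the graph of a map.
-/

open ENNReal

/-- The distortion of a (not necessarily continuous) map, in . -/
noncomputable def mapDis {X Y : Type*} [MetricSpace X] [MetricSpace Y] (f : X → Y) : ℝ≥0∞ :=
  ⨆ x : X, ⨆ x' : X, ENNReal.ofReal |dist x x' - dist (f x) (f x')|

/-- The set αℤ = { α·k : k ∈ ℤ } inside the real line. -/
def alphaZ (α : ℝ) : Set ℝ := Set.range fun k : ℤ => α * (k : ℝ)

/-- The set ℤ inside the real line. -/
def intZ : Set ℝ := Set.range fun k : ℤ => (k : ℝ)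

section Distortion

variable {X Y : Type*} [MetricSpace X] [MetricSpace Y]

theorem ofReal_le_mapDis {f : X → Y} {a : ℝ}
    (h : ∀ c < a, ∃ x x', c < |dist x x' - dist (f x) (f x')|) :
    ENNReal.ofReal a ≤ mapDis f := by
  refine le_of_forall_lt fun c hc => ?_
  obtain ⟨x, x', hxx'⟩ := h c.toReal (toReal_lt_of_lt_ofReal hc)
  calc c < ENNReal.ofReal |dist x x' - dist (f x) (f x')| :=
        (lt_ofReal_iff_toReal_lt (ne_top_of_lt hc)).2 hxx'
    _ ≤ mapDis f := le_iSup₂_of_le x x' le_rfl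

theorem mapDis_le_corDis {R : Set (X × Y)} {g : X → Y} (hg : ∀ x, (x, g x) ∈ R) :
    mapDis g ≤ corDis R :=
  iSup₂_le fun x x' => le_iSup₂_of_le (x, g x) (hg x) (le_iSup₂_of_le (x', g x') (hg x') le_rfl)

theorem le_corDis_of_forall_le_mapDis {c : ℝ≥0∞} (h : ∀ g : X → Y, c ≤ mapDis g)
    {R : Set (X × Y)} (hR : IsCorrespondence R) : c ≤ corDis R := by
  choose g hg using hR.1
  exact (h g).trans (mapDis_le_corDis hg)

theorem half_mul_le_ghDist {c : ℝ≥0∞} (h : ∀ R : Set (X × Y), IsCorrespondence R → c ≤ corDis R) :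
    1 / 2 * c ≤ ghDist X Y := by
  unfold ghDist
  gcongr
  exact le_iInf fun R => h R.1 R.2

end Distortion

theorem half_le_abs_half_sub_intCast (k : ℤ) : (1 : ℝ) / 2 ≤ |1 / 2 - (k : ℝ)| := by
  rcases le_or_gt k 0 with hk | hk
  · have : (k : ℝ) ≤ 0 := by exact_mod_cast hk
    exact le_abs.2 (Or.inl (by linarith))
  · have : (1 : ℝ) ≤ k := by exact_mod_cast hk
    exact le_abs.2 (Or.inr (by linarith))

theorem Irrational.exists_forall_lt_abs_mul_sub_intCast {α c : ℝ} (hirr : Irrational α)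
    (hc : c < 1 / 2) : ∃ n : ℤ, ∀ N : ℤ, c < |α * n - N| := by
  have hdense : Dense (AddSubgroup.closure {1, α} : Set ℝ) :=
    dense_addSubgroupClosure_pair_iff.2 (by simpa using hirr)
  obtain ⟨s, hs, hs_mem⟩ := Metric.dense_iff.1 hdense (1 / 2) (1 / 2 - c) (by linarith)
  obtain ⟨m, n, rfl⟩ := AddSubgroup.mem_closure_pair.1 hs_mem
  rw [Metric.mem_ball, Real.dist_eq, zsmul_eq_mul, zsmul_eq_mul, mul_one] at hs
  refine ⟨n, fun N => ?_⟩
  have hmN := half_le_abs_half_sub_intCast (m + N)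
  push_cast at hmN
  calc c < |1 / 2 - (m + N : ℝ)| - |m + n * α - 1 / 2| := by linarith
    _ ≤ |α * n - N| := by
      have := abs_sub_abs_le_abs_sub (1 / 2 - (m + N : ℝ)) (1 / 2 - (m + n * α))
      rwa [abs_sub_comm (1 / 2 : ℝ) (m + n * α),
        show 1 / 2 - (m + N : ℝ) - (1 / 2 - (m + n * α)) = α * n - N by ring] at this

theorem lt_abs_abs_sub_intCast {t c : ℝ} (h : ∀ N : ℤ, c < |t - N|) (N : ℤ) :
    c < |(|t|) - N| := by
  rcases abs_choice t with ht | ht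
  · rw [ht]; exact h N
  · rw [ht, ← abs_neg]
    simpa [add_comm] using h (-N)

theorem exists_dist_intZ_eq_intCast (a b : intZ) : ∃ N : ℤ, dist a b = N := by
  obtain ⟨k, hk⟩ := a.2
  obtain ⟨l, hl⟩ := b.2
  exact ⟨|k - l|, by rw [Subtype.dist_eq, Real.dist_eq, ← hk, ← hl]; push_cast; rfl⟩

theorem half_le_mapDis_alphaZ {α : ℝ} (hirr : Irrational α) (f : alphaZ α → intZ) :
    1 / 2 ≤ mapDis f := by
  have key : ENNReal.ofReal (1 / 2) ≤ mapDis f := by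
    refine ofReal_le_mapDis fun c hc => ?_
    obtain ⟨n, hn⟩ := hirr.exists_forall_lt_abs_mul_sub_intCast hc
    let x : alphaZ α := ⟨α * n, n, rfl⟩
    let x₀ : alphaZ α := ⟨0, 0, by simp⟩
    obtain ⟨N, hN⟩ := exists_dist_intZ_eq_intCast (f x) (f x₀)
    have hx : dist x x₀ = |α * n| := by simp [x, x₀, Subtype.dist_eq]
    exact ⟨x, x₀, by rw [hx, hN]; exact lt_abs_abs_sub_intCast hn N⟩
  simpa using key

theorem distortion_alphaZ_intZ_general (α : ℝ) (hirr : Irrational α) :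
    (∀ f : ↥(alphaZ α) → ↥intZ, (1 : ℝ≥0∞) / 2 ≤ mapDis f) ∧
    (∀ R : Set (↥(alphaZ α) × ↥intZ), IsCorrespondence R → (1 : ℝ≥0∞) / 2 ≤ corDis R) ∧
    (1 : ℝ≥0∞) / 4 ≤ ghDist ↥(alphaZ α) ↥intZ := by
  have hmap := half_le_mapDis_alphaZ hirr
  have hcor := fun R => le_corDis_of_forall_le_mapDis (R := R) hmap
  refine ⟨hmap, hcor, ?_⟩
  calc (1 : ℝ≥0∞) / 4 = 1 / 2 * (1 / 2) := by
        simp only [one_div]; rw [← ENNReal.mul_inv (by simp) (by simp)]; norm_num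
    _ ≤ ghDist (alphaZ α) intZ := half_mul_le_ghDist hcor

/-- For irrational α > 0, every map αℤ → ℤ has distortion at least 1/2, every
correspondence between αℤ and ℤ has distortion at least 1/2, and hence
the Gromov–Hausdorff distance between αℤ and ℤ is at least 1/4. -/
theorem distortion_alphaZ_intZ (α : ℝ) (hα : 0 < α) (hirr : Irrational α) :
    (∀ f : ↥(alphaZ α) → ↥intZ, (1 : ℝ≥0∞) / 2 ≤ mapDis f) ∧
    (∀ R : Set (↥(alphaZ α) × ↥intZ), IsCorrespondence R → (1 : ℝ≥0∞) / 2 ≤ corDis R) ∧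
    (1 : ℝ≥0∞) / 4 ≤ ghDist ↥(alphaZ α) ↥intZ :=
  distortion_alphaZ_intZ_general α hirr
end

section
/- Let (X_k) be a sequence of nonempty metric spaces and let Y be a nonempty complete metric space such that d̂(X_k, Y) → 0 as k → ∞. If every X_k is a proper metric space (all closed bounded balls are compact), then Y is proper. -/
open ENNReal

open Filter

/-- Properness is inherited by complete quasi-isometric limits. -/
theorem proper_of_qi_limit
    (X : ℕ → Type*) [∀ k, MetricSpace (X k)] [∀ k, Nonempty (X k)]
    (Y : Type*) [MetricSpace Y] [Nonempty Y] [CompleteSpace Y]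
    (hconv : Tendsto (fun k => qiDist (X k) Y) atTop (nhds 0))
    (hproper : ∀ k, ProperSpace (X k)) :
    ProperSpace Y := by
  constructor
  intro y₀ R
  refine TotallyBounded.isCompact_of_isClosed ?_ Metric.isClosed_closedBall
  rw [Metric.totallyBounded_iff]
  intro ε hε
  have hε4 : (0 : ℝ≥0∞) < ENNReal.ofReal (ε / 4) := by
    simp [ENNReal.ofReal_pos]; linarith
  obtain ⟨k, hk⟩ := (hconv.eventually_lt_const hε4).exists
  rw [qiDist] at hk
  obtain ⟨e, ⟨r, hr0, rfl, hQI⟩, hlt⟩ := sInf_lt_iff.mp hk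
  have hrε : r < ε / 4 :=
    (ENNReal.ofReal_lt_ofReal_iff (by linarith)).mp hlt
  obtain ⟨f, g, hf, hg, hgf, hfg⟩ := hQI
  have h1r : (0:ℝ) < 1 + r := by linarith
  set δ := ε / (4 * (1 + r)) with hδdef
  have hδ : 0 < δ := by positivity
  have hK : IsCompact (Metric.closedBall (g y₀) ((1 + r) * R + r)) :=
    (hproper k).isCompact_closedBall _ _
  obtain ⟨t, htfin, htcov⟩ := Metric.totallyBounded_iff.mp hK.totallyBounded δ hδ
  refine ⟨f '' t, htfin.image f, ?_⟩
  intro y hy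
  have hy' : g y ∈ Metric.closedBall (g y₀) ((1 + r) * R + r) := by
    rw [Metric.mem_closedBall]
    have h1 := (hg y y₀).2
    have h2 : dist y y₀ ≤ R := Metric.mem_closedBall.mp hy
    nlinarith
  obtain ⟨c, hct, hc⟩ := Set.mem_iUnion₂.mp (htcov hy')
  rw [Metric.mem_ball] at hc
  refine Set.mem_iUnion₂.mpr ⟨f c, ⟨c, hct, rfl⟩, ?_⟩
  rw [Metric.mem_ball]
  have h3 : dist y (f c) ≤ dist y (f (g y)) + dist (f (g y)) (f c) := dist_triangle _ _ _
  have h4 : dist y (f (g y)) ≤ r := by rw [dist_comm]; exact hfg y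
  have h5 : dist (f (g y)) (f c) ≤ (1 + r) * dist (g y) c + r := (hf (g y) c).2
  have h6 : (1 + r) * dist (g y) c < (1 + r) * δ := by
    apply mul_lt_mul_of_pos_left hc h1r
  have h7 : (1 + r) * δ = ε / 4 := by
    rw [hδdef]; field_simp
  linarith
end

section
/- Let X, Y, Z be metric spaces, let r, s ≥ 0, let R be a correspondence between X and Y such that for all (x,y), (x',y') ∈ R one has e^{−r}·d_Y(y,y') − e^r + 1 ≤ d_X(x,x') ≤ e^r·d_Y(y,y') + e^{2r} − e^r, and let S be a correspondence between Y and Z such that for all (y,z), (y',z') ∈ S one has e^{−s}·d_Z(z,z') − e^s + 1 ≤ d_Y(y,y') ≤ e^s·d_Z(z,z') + e^{2s} − e^s. Define T = { (x,z) : there exists y ∈ Y with (x,y) ∈ R and (y,z) ∈ S }. Then T is a correspondence between X and Z, and for all (x,z), (x',z') ∈ T one has e^{−(r+s)}·d_Z(z,z') − e^{r+s} + 1 ≤ d_X(x,x') ≤ e^{r+s}·d_Z(z,z') + e^{2(r+s)} − e^{r+s}. -/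
open ENNReal Real

/-- The composition of two correspondences. -/
def compCor {X Y Z : Type*} (R : Set (X × Y)) (S : Set (Y × Z)) : Set (X × Z) :=
  {pz : X × Z | ∃ y : Y, (pz.1, y) ∈ R ∧ (y, pz.2) ∈ S}

/-!
Writing `a = e^r`, the lower bound `e^{-r} d_Y - e^r + 1 ≤ d_X` is equivalent to
`d_Y ≤ a d_X + a² - a`, so both bounds say that each distance is at most `f_a` of the other,
where `f_a t = a t + a² - a` is `distortionBound a t`. The maps `f_a` are monotone and
`f_a ∘ f_b ≤ f_{ab}` for `a, b ≥ 1`, so chaining the bounds through an intermediate point `y`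
gives the bounds for the composite with `a b = e^{r+s}`.
-/

theorem IsCorrespondence.compCor {X Y Z : Type*} {R : Set (X × Y)} {S : Set (Y × Z)}
    (hR : IsCorrespondence R) (hS : IsCorrespondence S) : IsCorrespondence (compCor R S) := by
  constructor
  · intro x
    obtain ⟨y, hxy⟩ := hR.1 x
    obtain ⟨z, hyz⟩ := hS.1 y
    exact ⟨z, y, hxy, hyz⟩
  · intro z
    obtain ⟨y, hyz⟩ := hS.2 z
    obtain ⟨x, hxy⟩ := hR.2 y
    exact ⟨x, y, hxy, hyz⟩

def distortionBound (a t : ℝ) : ℝ := a * t + a ^ 2 - a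

theorem distortionBound_monotone {a : ℝ} (ha : 0 ≤ a) : Monotone (distortionBound a) :=
  fun _ _ h => by unfold distortionBound; gcongr

theorem distortionBound_comp_le {a b : ℝ} (ha : 1 ≤ a) (hb : 1 ≤ b) (t : ℝ) :
    distortionBound a (distortionBound b t) ≤ distortionBound (a * b) t := by
  have key : 0 ≤ a * (a - 1) * (b ^ 2 - 1) := by
    have : 0 ≤ b ^ 2 - 1 := by nlinarith
    positivity
  unfold distortionBound
  nlinarith

theorem inv_mul_sub_add_one_le_iff {a u v : ℝ} (ha : 0 < a) :
    a⁻¹ * u - a + 1 ≤ v ↔ u ≤ distortionBound a v := by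
  unfold distortionBound
  rw [← mul_le_mul_iff_of_pos_left ha]
  field_simp
  constructor <;> intro h <;> linarith

theorem exp_two_mul_eq_distortionBound (r t : ℝ) :
    exp r * t + exp (2 * r) - exp r = distortionBound (exp r) t := by
  rw [distortionBound, two_mul, exp_add, sq]

section Distortion

variable {X Y Z : Type*} [Dist X] [Dist Y] [Dist Z]

def IsDistortedBy (a : ℝ) (R : Set (X × Y)) : Prop :=
  ∀ p ∈ R, ∀ q ∈ R,
    dist p.1 q.1 ≤ distortionBound a (dist p.2 q.2) ∧
    dist p.2 q.2 ≤ distortionBound a (dist p.1 q.1)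

theorem isDistortedBy_exp_iff (r : ℝ) (R : Set (X × Y)) :
    IsDistortedBy (exp r) R ↔ ∀ p ∈ R, ∀ q ∈ R,
      exp (-r) * dist p.2 q.2 - exp r + 1 ≤ dist p.1 q.1 ∧
      dist p.1 q.1 ≤ exp r * dist p.2 q.2 + exp (2 * r) - exp r := by
  simp only [IsDistortedBy, exp_neg, inv_mul_sub_add_one_le_iff (exp_pos r),
    exp_two_mul_eq_distortionBound, and_comm]

theorem IsDistortedBy.compCor {a b : ℝ} (ha : 1 ≤ a) (hb : 1 ≤ b)
    {R : Set (X × Y)} {S : Set (Y × Z)} (hR : IsDistortedBy a R) (hS : IsDistortedBy b S) :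
    IsDistortedBy (a * b) (compCor R S) := by
  rintro ⟨x, z⟩ ⟨y, hxy, hyz⟩ ⟨x', z'⟩ ⟨y', hxy', hyz'⟩
  obtain ⟨hxy_le, hyx_le⟩ := hR (x, y) hxy (x', y') hxy'
  obtain ⟨hyz_le, hzy_le⟩ := hS (y, z) hyz (y', z') hyz'
  constructor
  · calc dist x x' ≤ distortionBound a (dist y y') := hxy_le
      _ ≤ distortionBound a (distortionBound b (dist z z')) :=
        distortionBound_monotone (by linarith) hyz_le
      _ ≤ distortionBound (a * b) (dist z z') := distortionBound_comp_le ha hb _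
  · calc dist z z' ≤ distortionBound b (dist y y') := hzy_le
      _ ≤ distortionBound b (distortionBound a (dist x x')) :=
        distortionBound_monotone (by linarith) hyx_le
      _ ≤ distortionBound (a * b) (dist x x') := by
        rw [mul_comm]; exact distortionBound_comp_le hb ha _

end Distortion

/-- Composition of correspondences with controlled quasi-isometric distortion. -/
theorem compCor_isCorrespondence_and_distortion
    {X Y Z : Type*} [MetricSpace X] [MetricSpace Y] [MetricSpace Z]
    (r s : ℝ) (hr : 0 ≤ r) (hs : 0 ≤ s)
    (R : Set (X × Y)) (hR : IsCorrespondence R)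
    (S : Set (Y × Z)) (hS : IsCorrespondence S)
    (hRdis : ∀ p ∈ R, ∀ q ∈ R,
      exp (-r) * dist p.2 q.2 - exp r + 1 ≤ dist p.1 q.1 ∧
      dist p.1 q.1 ≤ exp r * dist p.2 q.2 + exp (2 * r) - exp r)
    (hSdis : ∀ p ∈ S, ∀ q ∈ S,
      exp (-s) * dist p.2 q.2 - exp s + 1 ≤ dist p.1 q.1 ∧
      dist p.1 q.1 ≤ exp s * dist p.2 q.2 + exp (2 * s) - exp s) :
    IsCorrespondence (compCor R S) ∧
    ∀ p ∈ compCor R S, ∀ q ∈ compCor R S,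
      exp (-(r + s)) * dist p.2 q.2 - exp (r + s) + 1 ≤ dist p.1 q.1 ∧
      dist p.1 q.1 ≤ exp (r + s) * dist p.2 q.2 + exp (2 * (r + s)) - exp (r + s) := by
  refine ⟨hR.compCor hS, ?_⟩
  rw [← isDistortedBy_exp_iff] at hRdis hSdis ⊢
  rw [exp_add]
  exact hRdis.compCor (one_le_exp hr) (one_le_exp hs) hSdis
end

section
/- Let X, Y be nonempty metric spaces, let r ≥ 0, and let R be a correspondence between X and Y such that for all (x,y), (x',y') ∈ R one has e^{−r}·d_Y(y,y') − e^r + 1 ≤ d_X(x,x') ≤ e^r·d_Y(y,y') + e^{2r} − e^r. For t ∈ [0,1], let d_t be the pseudometric on the set R defined by d_t((x,y), (x',y')) = (1−t)·d_X(x,x') + t·d_Y(y,y'). Then for all s, t ∈ [0,1] and all p, q ∈ R, setting δ = |s − t|, one has d_s(p, q) ≤ (1 + δ·(e^r − 1))·d_t(p, q) + δ·(e^{2r} − e^r). -/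
/-!
Write `a = d_X(x,x')`, `b = d_Y(y,y')` and `E = e^r`. The two-sided distortion bound gives
`a ≤ E b + (E² - E)` and `b ≤ E a + (E² - E)`, hence
`|a - b| ≤ (E - 1) min a b + (E² - E)`.
Since `d_s - d_t = (t - s)(a - b)` and `min a b ≤ d_t`, the estimate follows.
-/

open Real

theorem abs_sub_le_sub_one_mul_min_add {a b E c : ℝ} (hab : a ≤ E * b + c)
    (hba : b ≤ E * a + c) : |a - b| ≤ (E - 1) * min a b + c := by
  rcases le_total a b with h | h
  · rw [abs_sub_comm, abs_of_nonneg (sub_nonneg.2 h), min_eq_left h]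
    linarith
  · rw [abs_of_nonneg (sub_nonneg.2 h), min_eq_right h]
    linarith

theorem min_le_convex_combination (a b : ℝ) {t : ℝ} (ht : t ∈ Set.Icc (0 : ℝ) 1) :
    min a b ≤ (1 - t) * a + t * b := by
  obtain ⟨ht0, ht1⟩ := ht
  nlinarith [min_le_left a b, min_le_right a b]

theorem convex_combination_le_of_abs_sub_le {a b K c : ℝ} (s t : ℝ)
    (h : |a - b| ≤ K * ((1 - t) * a + t * b) + c) :
    (1 - s) * a + s * b ≤ (1 + |s - t| * K) * ((1 - t) * a + t * b) + |s - t| * c := by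
  calc (1 - s) * a + s * b = ((1 - t) * a + t * b) + (t - s) * (a - b) := by ring
    _ ≤ ((1 - t) * a + t * b) + |s - t| * |a - b| := by
        rw [abs_sub_comm s t, ← abs_mul]
        gcongr
        exact le_abs_self _
    _ ≤ ((1 - t) * a + t * b) + |s - t| * (K * ((1 - t) * a + t * b) + c) := by
        gcongr
    _ = (1 + |s - t| * K) * ((1 - t) * a + t * b) + |s - t| * c := by ring

theorem le_exp_mul_add_of_exp_neg_mul_sub_le {a b r : ℝ}
    (h : exp (-r) * b - exp r + 1 ≤ a) : b ≤ exp r * a + (exp (2 * r) - exp r) := by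
  have hcancel : exp r * exp (-r) = 1 := by rw [← exp_add, add_neg_cancel, exp_zero]
  have h2r : exp (2 * r) = exp r * exp r := by rw [two_mul, exp_add]
  have := mul_le_mul_of_nonneg_left h (exp_pos r).le
  rw [mul_add, mul_sub, ← mul_assoc, hcancel, one_mul, mul_one] at this
  linarith

theorem interpolated_pseudometric_estimate_general
    {X Y : Type*} [MetricSpace X] [MetricSpace Y]
    (r : ℝ) (hr : 0 ≤ r) (R : Set (X × Y))
    (hRdis : ∀ p ∈ R, ∀ q ∈ R,
      exp (-r) * dist p.2 q.2 - exp r + 1 ≤ dist p.1 q.1 ∧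
      dist p.1 q.1 ≤ exp r * dist p.2 q.2 + exp (2 * r) - exp r)
    (s t : ℝ) (ht : t ∈ Set.Icc (0 : ℝ) 1)
    (p q : X × Y) (hp : p ∈ R) (hq : q ∈ R) :
    (1 - s) * dist p.1 q.1 + s * dist p.2 q.2 ≤
      (1 + |s - t| * (exp r - 1)) * ((1 - t) * dist p.1 q.1 + t * dist p.2 q.2) +
        |s - t| * (exp (2 * r) - exp r) := by
  obtain ⟨hlower, hupper⟩ := hRdis p hp q hq
  have hdiff : |dist p.1 q.1 - dist p.2 q.2| ≤
      (exp r - 1) * min (dist p.1 q.1) (dist p.2 q.2) + (exp (2 * r) - exp r) :=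
    abs_sub_le_sub_one_mul_min_add (by linarith) (le_exp_mul_add_of_exp_neg_mul_sub_le hlower)
  have hE : 0 ≤ exp r - 1 := sub_nonneg.2 (one_le_exp hr)
  refine convex_combination_le_of_abs_sub_le s t (hdiff.trans ?_)
  gcongr
  exact min_le_convex_combination _ _ ht

/-- Lipschitz-type estimate between the interpolated pseudometrics d_s and d_t
on a correspondence R of quasi-isometric distortion at most r. -/
theorem interpolated_pseudometric_estimate
    {X Y : Type*} [MetricSpace X] [MetricSpace Y] [Nonempty X] [Nonempty Y]
    (r : ℝ) (hr : 0 ≤ r) (R : Set (X × Y)) (hR : IsCorrespondence R)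
    (hRdis : ∀ p ∈ R, ∀ q ∈ R,
      exp (-r) * dist p.2 q.2 - exp r + 1 ≤ dist p.1 q.1 ∧
      dist p.1 q.1 ≤ exp r * dist p.2 q.2 + exp (2 * r) - exp r)
    (s t : ℝ) (hs : s ∈ Set.Icc (0 : ℝ) 1) (ht : t ∈ Set.Icc (0 : ℝ) 1)
    (p q : X × Y) (hp : p ∈ R) (hq : q ∈ R) :
    (1 - s) * dist p.1 q.1 + s * dist p.2 q.2 ≤
      (1 + |s - t| * (exp r - 1)) * ((1 - t) * dist p.1 q.1 + t * dist p.2 q.2) +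
        |s - t| * (exp (2 * r) - exp r) :=
  interpolated_pseudometric_estimate_general r hr R hRdis s t ht p q hp hq
end
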